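/- arXiv:2103.10575 — 6 statements merged into one kernel-verified Lean document; each statement's English description precedes it below -/
import Mathlib

section
/- Let A, B, C be k×k matrices over a field (or commutative ring), with Ā = A - I. Suppose Ā, (Ā - B Ā⁻¹ C), and H = Ā - C Ā⁻¹ B - (B - C Ā⁻¹ C)(Ā - B Ā⁻¹ C)⁻¹(C - B Ā⁻¹ B) are invertible. Define D = (B - C Ā⁻¹ C)(Ā - B Ā⁻¹ C)⁻¹ B Ā⁻¹ - C Ā⁻¹, Z = H⁻¹ D, Y = -(Ā - B Ā⁻¹ C)⁻¹ (C - B Ā⁻¹ B) Z - (Ā - B Ā⁻¹ C)⁻¹ B Ā⁻¹, and X = Ā⁻¹ (I - B Z - C Y). Then Ā X + B Z + C Y = I, C X + Ā Z + B Y = 0, and B X + C Z + Ā Y = 0; consequently the block matrix [[X,Y,Z],[Z,X,Y],[Y,Z,X]] is the inverse of -[[I-A, -B, -C],[-C, I-A, -B],[-B, -C, I-A]] in block form, i.e. [[Ā,B,C],[C,Ā,B],[B,C,Ā]] · [[X,Y,Z],[Z,X,Y],[Y,Z,X]] = I. -/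
/-!
Block Gaussian elimination on the circulant system
`Ā X + B Z + C Y = 1`, `C X + Ā Z + B Y = 0`, `B X + C Z + Ā Y = 0`:
the first equation gives `X` in terms of `Y, Z`; substituting into the third leaves
`S Y = -(C - B Ā⁻¹ B) Z - B Ā⁻¹` with the Schur complement `S = Ā - B Ā⁻¹ C`; substituting both
into the second leaves `H Z = D`. Only right inverses of `Ā`, `S` and `H` are needed, so the
elimination works in any ring. A product of block circulants is again block circulant, with first
block row given by the three left-hand sides, so the product is the identity.
-/

/-- The 3k × 3k block-circulant matrix with block rows (A, B, C), (C, A, B), (B, C, A). -/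
def blockCirc {K : Type*} [Field K] {k : ℕ} (A B C : Matrix (Fin k) (Fin k) K) :
    Matrix (Fin 3 × Fin k) (Fin 3 × Fin k) K :=
  fun p q => (![![A, B, C], ![C, A, B], ![B, C, A]] p.1 q.1) p.2 q.2

section CirculantSystem

variable {R : Type*} [Ring R] {a b c a' s' x y z : R}

theorem circulant_system_of_schur (ha : a * a' = 1) (hs : (a - b * a' * c) * s' = 1)
    (hz : (a - c * a' * b - (b - c * a' * c) * s' * (c - b * a' * b)) * z =
      (b - c * a' * c) * s' * b * a' - c * a')
    (hy : y = -(s' * (c - b * a' * b) * z) - s' * b * a')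
    (hx : x = a' * (1 - b * z - c * y)) :
    a * x + b * z + c * y = 1 ∧ c * x + a * z + b * y = 0 ∧ b * x + c * z + a * y = 0 := by
  have hax : a * x = 1 - b * z - c * y := by rw [hx, ← mul_assoc, ha, one_mul]
  have hsy : (a - b * a' * c) * y = -((c - b * a' * b) * z) - b * a' := by
    rw [hy]
    simp only [mul_sub, mul_neg, ← mul_assoc, hs, one_mul]
  refine ⟨by rw [hax]; abel, ?_, ?_⟩
  · calc c * x + a * z + b * y
        = (a - c * a' * b - (b - c * a' * c) * s' * (c - b * a' * b)) * z -
            ((b - c * a' * c) * s' * b * a' - c * a') := by rw [hx, hy]; noncomm_ring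
      _ = 0 := by rw [hz, sub_self]
  · calc b * x + c * z + a * y = b * x + c * z + b * a' * c * y + (a - b * a' * c) * y := by
          noncomm_ring
      _ = 0 := by rw [hsy, hx]; noncomm_ring

end CirculantSystem

section BlockCirc

variable {K : Type*} [Field K] {k : ℕ}

theorem blockCirc_mul (A B C X Y Z : Matrix (Fin k) (Fin k) K) :
    blockCirc A B C * blockCirc X Y Z =
      blockCirc (A * X + B * Z + C * Y) (B * X + C * Z + A * Y) (C * X + A * Z + B * Y) := by
  ext ⟨i, x⟩ ⟨j, y⟩
  simp only [Matrix.mul_apply, blockCirc, Fintype.sum_prod_type, Fin.sum_univ_three]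
  fin_cases i <;> fin_cases j <;>
    simp only [Fin.zero_eta, Fin.mk_one, Fin.reduceFinMk, Matrix.cons_val_zero,
      Matrix.cons_val_one, Matrix.cons_val_two, Matrix.head_cons, Matrix.tail_cons,
      Matrix.add_apply, Matrix.mul_apply] <;> abel

theorem blockCirc_one : blockCirc (1 : Matrix (Fin k) (Fin k) K) 0 0 = 1 := by
  ext ⟨i, x⟩ ⟨j, y⟩
  fin_cases i <;> fin_cases j <;>
    simp only [blockCirc, Fin.zero_eta, Fin.mk_one, Fin.reduceFinMk, Matrix.cons_val_zero,
      Matrix.cons_val_one, Matrix.cons_val_two, Matrix.head_cons, Matrix.tail_cons,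
      Matrix.one_apply, Matrix.zero_apply, Prod.mk.injEq, true_and, Fin.reduceEq, false_and,
      if_false]

end BlockCirc

theorem fast_inversion_general {K : Type*} [Field K] {k : ℕ}
    (B C : Matrix (Fin k) (Fin k) K)
    (Abar : Matrix (Fin k) (Fin k) K)
    (hA : IsUnit Abar.det)
    (hABC : IsUnit (Abar - B * Abar⁻¹ * C).det)
    (H : Matrix (Fin k) (Fin k) K)
    (hH : H = Abar - C * Abar⁻¹ * B -
      (B - C * Abar⁻¹ * C) * (Abar - B * Abar⁻¹ * C)⁻¹ * (C - B * Abar⁻¹ * B))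
    (hHinv : IsUnit H.det)
    (D : Matrix (Fin k) (Fin k) K)
    (hD : D = (B - C * Abar⁻¹ * C) * (Abar - B * Abar⁻¹ * C)⁻¹ * B * Abar⁻¹ - C * Abar⁻¹)
    (Z : Matrix (Fin k) (Fin k) K) (hZ : Z = H⁻¹ * D)
    (Y : Matrix (Fin k) (Fin k) K)
    (hY : Y = -((Abar - B * Abar⁻¹ * C)⁻¹ * (C - B * Abar⁻¹ * B) * Z) -
      (Abar - B * Abar⁻¹ * C)⁻¹ * B * Abar⁻¹)
    (X : Matrix (Fin k) (Fin k) K) (hX : X = Abar⁻¹ * (1 - B * Z - C * Y)) :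
    Abar * X + B * Z + C * Y = 1 ∧
    C * X + Abar * Z + B * Y = 0 ∧
    B * X + C * Z + Abar * Y = 0 ∧
    blockCirc Abar B C * blockCirc X Y Z = 1 := by
  have hHZ : H * Z = D := by rw [hZ, ← mul_assoc, Matrix.mul_nonsing_inv _ hHinv, one_mul]
  obtain ⟨h₁, h₂, h₃⟩ := circulant_system_of_schur (Matrix.mul_nonsing_inv _ hA)
    (Matrix.mul_nonsing_inv _ hABC) (hH ▸ hD ▸ hHZ) hY hX
  exact ⟨h₁, h₂, h₃, by rw [blockCirc_mul, h₁, h₃, h₂, blockCirc_one]⟩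

theorem fast_inversion {K : Type*} [Field K] {k : ℕ}
    (A B C : Matrix (Fin k) (Fin k) K)
    (Abar : Matrix (Fin k) (Fin k) K) (hAbar : Abar = A - 1)
    (hA : IsUnit Abar.det)
    (hABC : IsUnit (Abar - B * Abar⁻¹ * C).det)
    (H : Matrix (Fin k) (Fin k) K)
    (hH : H = Abar - C * Abar⁻¹ * B -
      (B - C * Abar⁻¹ * C) * (Abar - B * Abar⁻¹ * C)⁻¹ * (C - B * Abar⁻¹ * B))
    (hHinv : IsUnit H.det)
    (D : Matrix (Fin k) (Fin k) K)
    (hD : D = (B - C * Abar⁻¹ * C) * (Abar - B * Abar⁻¹ * C)⁻¹ * B * Abar⁻¹ - C * Abar⁻¹)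
    (Z : Matrix (Fin k) (Fin k) K) (hZ : Z = H⁻¹ * D)
    (Y : Matrix (Fin k) (Fin k) K)
    (hY : Y = -((Abar - B * Abar⁻¹ * C)⁻¹ * (C - B * Abar⁻¹ * B) * Z) -
      (Abar - B * Abar⁻¹ * C)⁻¹ * B * Abar⁻¹)
    (X : Matrix (Fin k) (Fin k) K) (hX : X = Abar⁻¹ * (1 - B * Z - C * Y)) :
    Abar * X + B * Z + C * Y = 1 ∧
    C * X + Abar * Z + B * Y = 0 ∧
    B * X + C * Z + Abar * Y = 0 ∧
    blockCirc Abar B C * blockCirc X Y Z = 1 :=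
  fast_inversion_general B C Abar hA hABC H hH hHinv D hD Z hZ Y hY X hX
end

section
/- For every real θ, letting z = exp(iθ) ∈ ℂ, one has |−z³/8 + z²/4 − 3z⁴/(16 + 8z)|² = (sin θ)² / (5 + 4·cos θ). -/
/-!
Over a common denominator the amplitude is `z²(1 - z²) / (2(2 + z))`. For `z = e^{iθ}` one has
`|z²| = 1`, `|1 - z²|² = 2 - 2 cos 2θ = 4 sin² θ` and `|2 + z|² = 5 + 4 cos θ > 0`.
-/

open Complex

theorem sq_norm_ofReal_add_exp_mul_I (a θ : ℝ) :
    ‖(a : ℂ) + exp (θ * I)‖ ^ 2 = a ^ 2 + 2 * a * Real.cos θ + 1 := by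
  rw [Complex.sq_norm, normSq_apply]
  simp only [add_re, add_im, ofReal_re, ofReal_im, exp_ofReal_mul_I_re, exp_ofReal_mul_I_im]
  linear_combination Real.sin_sq_add_cos_sq θ

theorem sq_norm_one_sub_exp_mul_I_sq (θ : ℝ) :
    ‖1 - exp (θ * I) ^ 2‖ ^ 2 = 4 * Real.sin θ ^ 2 := by
  have h := sq_norm_ofReal_add_exp_mul_I (-1) (2 * θ)
  rw [norm_sub_rev, sub_eq_neg_add, ← exp_nat_mul]
  push_cast at h ⊢
  rw [← mul_assoc, h, Real.cos_two_mul, Real.cos_sq']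
  ring

theorem u4_eq_common_denom {K : Type*} [Field K] [CharZero K] {z : K} (hz : 2 + z ≠ 0) :
    -z ^ 3 / 8 + z ^ 2 / 4 - 3 * z ^ 4 / (16 + 8 * z) = z ^ 2 * (1 - z ^ 2) / (2 * (2 + z)) := by
  rw [show (16 : K) + 8 * z = 8 * (2 + z) by ring]
  field_simp
  ring

theorem u4_abs_sq (θ : ℝ) :
    (‖-(Complex.exp (θ * Complex.I)) ^ 3 / 8 +
      (Complex.exp (θ * Complex.I)) ^ 2 / 4 -
      3 * (Complex.exp (θ * Complex.I)) ^ 4 / (16 + 8 * Complex.exp (θ * Complex.I))‖) ^ 2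
    = (Real.sin θ) ^ 2 / (5 + 4 * Real.cos θ) := by
  have hden : ‖2 + exp (θ * I)‖ ^ 2 = 5 + 4 * Real.cos θ := by
    have := sq_norm_ofReal_add_exp_mul_I 2 θ
    push_cast at this
    linear_combination this
  have hpos : 0 < 5 + 4 * Real.cos θ := by linarith [Real.neg_one_le_cos θ]
  have hne : 2 + exp (θ * I) ≠ 0 := by
    intro h
    rw [h, norm_zero] at hden
    linarith
  rw [u4_eq_common_denom hne, norm_div, norm_mul, norm_mul, norm_pow, norm_exp_ofReal_mul_I,
    Complex.norm_two, div_pow, mul_pow, mul_pow, sq_norm_one_sub_exp_mul_I_sq, hden]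
  field_simp
  ring
end

section
/- For every real θ, letting z = exp(iθ) ∈ ℂ, one has |z³/8 + z²/4 + 3z⁴/(16 + 8z)|² = 1/4 − (sin θ)² / (5 + 4·cos θ). -/
/-!
Over the common denominator `8 (2 + z)` the amplitude is `z² (z² + z + 1) / (2 (2 + z))`. On the
unit circle `z̄ = z⁻¹`, so `z² + z + 1 = z (z + z̄ + 1) = z (1 + 2 cos θ)`, while
`‖2 + z‖² = 5 + 4 cos θ`. Hence `‖u₅‖² = (1 + 2 cos θ)² / (4 (5 + 4 cos θ))`, which equals the
right-hand side because `sin² θ = 1 - cos² θ`.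
-/

open Complex ComplexConjugate

theorem Complex.sq_add_self_add_one_of_norm_eq_one {z : ℂ} (hz : ‖z‖ = 1) :
    z ^ 2 + z + 1 = z * ((1 + 2 * z.re : ℝ) : ℂ) := by
  have hconj : z * conj z = 1 := by
    rw [mul_conj, ← Complex.sq_norm, hz, one_pow, ofReal_one]
  have hre : ((2 * z.re : ℝ) : ℂ) = z + conj z := (add_conj z).symm
  push_cast at hre ⊢
  rw [hre]
  linear_combination -hconj

theorem Complex.sq_norm_two_add_of_norm_eq_one {z : ℂ} (hz : ‖z‖ = 1) :
    ‖2 + z‖ ^ 2 = 5 + 4 * z.re := by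
  have hsq : z.re * z.re + z.im * z.im = 1 := by
    rw [← normSq_apply, ← Complex.sq_norm, hz, one_pow]
  rw [Complex.sq_norm, normSq_apply]
  simp only [add_re, add_im, re_ofNat, im_ofNat]
  linear_combination hsq

theorem Complex.five_add_four_mul_re_pos_of_norm_eq_one {z : ℂ} (hz : ‖z‖ = 1) :
    0 < 5 + 4 * z.re := by
  have := neg_le_of_abs_le (hz ▸ abs_re_le_norm z)
  linarith

theorem Complex.two_add_ne_zero_of_norm_eq_one {z : ℂ} (hz : ‖z‖ = 1) : 2 + z ≠ 0 := by
  intro h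
  have := sq_norm_two_add_of_norm_eq_one hz
  rw [h, norm_zero] at this
  linarith [five_add_four_mul_re_pos_of_norm_eq_one hz]

/-- `u₅⁽¹⁾` at `r = 1/2`. -/
noncomputable def u5 (z : ℂ) : ℂ :=
  z ^ 3 / 8 + z ^ 2 / 4 + 3 * z ^ 4 / (16 + 8 * z)

theorem u5_eq_of_two_add_ne_zero {z : ℂ} (hz : 2 + z ≠ 0) :
    u5 z = z ^ 2 * (z ^ 2 + z + 1) / (2 * (2 + z)) := by
  rw [u5, show (16 : ℂ) + 8 * z = 8 * (2 + z) by ring]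
  field_simp
  ring

theorem sq_norm_u5_of_norm_eq_one {z : ℂ} (hz : ‖z‖ = 1) :
    ‖u5 z‖ ^ 2 = (1 + 2 * z.re) ^ 2 / (4 * (5 + 4 * z.re)) := by
  rw [u5_eq_of_two_add_ne_zero (two_add_ne_zero_of_norm_eq_one hz),
    sq_add_self_add_one_of_norm_eq_one hz, norm_div, norm_mul, norm_mul, norm_mul, norm_pow, hz,
    norm_real, Real.norm_eq_abs, Complex.norm_two, div_pow, mul_pow, mul_pow, mul_pow, sq_abs,
    sq_norm_two_add_of_norm_eq_one hz]
  ring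

theorem u5_abs_sq (θ : ℝ) :
    (‖(Complex.exp (θ * Complex.I)) ^ 3 / 8 +
      (Complex.exp (θ * Complex.I)) ^ 2 / 4 +
      3 * (Complex.exp (θ * Complex.I)) ^ 4 / (16 + 8 * Complex.exp (θ * Complex.I))‖) ^ 2
    = 1 / 4 - (Real.sin θ) ^ 2 / (5 + 4 * Real.cos θ) := by
  have hz := norm_exp_ofReal_mul_I θ
  have hpos := five_add_four_mul_re_pos_of_norm_eq_one hz
  rw [exp_ofReal_mul_I_re] at hpos
  have hne : 4 * (5 + 4 * Real.cos θ) ≠ 0 := mul_ne_zero four_ne_zero hpos.ne'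
  calc _ = ‖u5 (exp (θ * I))‖ ^ 2 := rfl
    _ = (1 + 2 * Real.cos θ) ^ 2 / (4 * (5 + 4 * Real.cos θ)) := by
      rw [sq_norm_u5_of_norm_eq_one hz, exp_ofReal_mul_I_re]
    _ = 1 / 4 - Real.sin θ ^ 2 / (5 + 4 * Real.cos θ) := by
      rw [Real.sin_sq, div_sub_div _ _ four_ne_zero hpos.ne', div_eq_div_iff hne hne]
      ring
end

section
/- For every real θ, letting z = exp(iθ) ∈ ℂ, one has |z³/8 − z²/4 − z⁴/(16 + 8z)|² = 1 / (4·(5 + 4·cos θ)). -/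
/-!
With `w = r z`, the amplitude collapses to `u₆ = -w² / (1 + w)`, because
`(w³ - w²)(1 + w) - w⁴ = -w²`. Hence `|u₆|² = |w|⁴ / |1 + w|²`, and on the unit circle
`|w| = 1/2` while `|1 + z/2|² = 5/4 + cos θ`.
-/

open Complex

section

variable {K : Type*} [Field K]

def u6 (r z : K) : K :=
  r ^ 3 * z ^ 3 - r ^ 2 * z ^ 2 - r ^ 4 * z ^ 4 / (1 + r * z)

theorem u6_eq_neg_sq_div (r z : K) (h : 1 + r * z ≠ 0) :
    u6 r z = -(r * z) ^ 2 / (1 + r * z) := by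
  unfold u6
  field_simp
  ring

end

theorem norm_one_add_mul_exp_sq (r θ : ℝ) :
    ‖1 + r * exp (θ * I)‖ ^ 2 = 1 + 2 * r * Real.cos θ + r ^ 2 := by
  rw [Complex.sq_norm, normSq_apply]
  simp only [add_re, add_im, one_re, one_im, re_ofReal_mul, im_ofReal_mul,
    exp_ofReal_mul_I_re, exp_ofReal_mul_I_im]
  nlinarith [Real.sin_sq_add_cos_sq θ]

theorem u6_abs_sq (θ : ℝ) :
    (‖(Complex.exp (θ * Complex.I)) ^ 3 / 8 -
      (Complex.exp (θ * Complex.I)) ^ 2 / 4 -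
      (Complex.exp (θ * Complex.I)) ^ 4 / (16 + 8 * Complex.exp (θ * Complex.I))‖) ^ 2
    = 1 / (4 * (5 + 4 * Real.cos θ)) := by
  set z := exp (θ * I)
  have hz : ‖z‖ = 1 := norm_exp_ofReal_mul_I θ
  have hnorm : ‖1 + 1 / 2 * z‖ ^ 2 = 5 / 4 + Real.cos θ := by
    have := norm_one_add_mul_exp_sq (1 / 2) θ
    push_cast at this
    rw [this]
    ring
  have hpos : 0 < 5 / 4 + Real.cos θ := by linarith [Real.neg_one_le_cos θ]
  have hne : 1 + 1 / 2 * z ≠ 0 := by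
    intro h
    rw [h, norm_zero] at hnorm
    linarith
  have hu : z ^ 3 / 8 - z ^ 2 / 4 - z ^ 4 / (16 + 8 * z) = -(1 / 2 * z) ^ 2 / (1 + 1 / 2 * z) := by
    rw [← u6_eq_neg_sq_div _ _ hne, u6, show (16 : ℂ) + 8 * z = 16 * (1 + 1 / 2 * z) by ring]
    field_simp
    ring
  calc _ = 1 / 16 / (5 / 4 + Real.cos θ) := by
        rw [hu, norm_div, norm_neg, norm_pow, norm_mul, hz, div_pow, hnorm]
        norm_num
    _ = 1 / (4 * (5 + 4 * Real.cos θ)) := by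
        field_simp
        ring
end

section
/- The integral (1/(2π)) ∫₀^{2π} 1 / (4·|e^{3iθ} − e^{2iθ} − 4|²) dθ equals 19/1056. -/
/-!
Write `p z = z³ - z² - 4` and `N z = -19 z³ + 21 z² + 8 z - 76`. On the unit circle `conj z = z⁻¹`,
and `N` is chosen (by solving a linear system, possible because `p` is coprime to its reversal)
so that `N u · p v + N v · p u = 528` whenever `u v = 1`. Hence on the circle
`1 / (4 |p z|²) = Re (N z / (1056 p z))`. Since `|z³ - z²| ≤ 2 < 4` on the closed unit disc, the
function `N / (1056 p)` is holomorphic there, and the mean value property gives the average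
`Re (N 0 / (1056 p 0)) = 76 / 4224 = 19 / 1056`.
-/

open Complex ComplexConjugate Metric

theorem circleAverage_re_of_diffContOnCl {f : ℂ → ℂ} {c : ℂ} {R : ℝ}
    (hf : DiffContOnCl ℂ f (ball c |R|)) :
    Real.circleAverage (fun z ↦ (f z).re) c R = (f c).re := by
  have hint : CircleIntegrable f c R :=
    (hf.continuousOn_ball.mono sphere_subset_closedBall).circleIntegrable'
  rw [← hf.circleAverage]
  exact reCLM.circleAverage_comp_comm hint

lemma cubic_ne_zero_of_norm_le_one {z : ℂ} (hz : ‖z‖ ≤ 1) : z ^ 3 - z ^ 2 - 4 ≠ 0 := by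
  intro h
  have : ‖z ^ 3 - z ^ 2‖ ≤ 2 := calc
    ‖z ^ 3 - z ^ 2‖ ≤ ‖z ^ 3‖ + ‖z ^ 2‖ := norm_sub_le _ _
    _ ≤ 2 := by simp only [norm_pow]; nlinarith [norm_nonneg z]
  rw [show z ^ 3 - z ^ 2 = 4 by linear_combination h] at this
  norm_num at this

lemma cubic_bezout_of_mul_eq_one {u v : ℂ} (huv : u * v = 1) :
    (-19 * u ^ 3 + 21 * u ^ 2 + 8 * u - 76) * (v ^ 3 - v ^ 2 - 4) +
      (-19 * v ^ 3 + 21 * v ^ 2 + 8 * v - 76) * (u ^ 3 - u ^ 2 - 4) = 528 := by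
  linear_combination (-80 + 32 * (u + v) + 8 * (u ^ 2 + v ^ 2) - 80 * u * v
    + 40 * u * v * (u + v) - 38 * u ^ 2 * v ^ 2) * huv

lemma one_div_four_mul_norm_sq_eq_re {z : ℂ} (hz : ‖z‖ = 1) :
    1 / (4 * ‖z ^ 3 - z ^ 2 - 4‖ ^ 2) =
      ((-19 * z ^ 3 + 21 * z ^ 2 + 8 * z - 76) / (1056 * (z ^ 3 - z ^ 2 - 4))).re := by
  have hzz : z * conj z = 1 := by rw [mul_conj', hz]; norm_num
  have hp := cubic_ne_zero_of_norm_le_one hz.le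
  have hp' := cubic_ne_zero_of_norm_le_one (z := conj z) (by rw [norm_conj, hz])
  have hb := cubic_bezout_of_mul_eq_one hzz
  apply ofReal_injective
  rw [re_eq_add_conj]
  push_cast
  rw [← mul_conj']
  simp only [map_div₀, map_sub, map_add, map_mul, map_pow, map_ofNat, map_neg]
  generalize z ^ 3 - z ^ 2 - 4 = P at *
  generalize conj z ^ 3 - conj z ^ 2 - 4 = Q at *
  field_simp
  linear_combination -4 * hb

theorem first_passage_prob_50 :
    (1 / (2 * Real.pi)) * ∫ θ in (0 : ℝ)..(2 * Real.pi),
      1 / (4 * (‖Complex.exp (3 * θ * Complex.I) -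
        Complex.exp (2 * θ * Complex.I) - 4‖) ^ 2) = 19 / 1056 := by
  set H : ℂ → ℂ := fun z ↦ (-19 * z ^ 3 + 21 * z ^ 2 + 8 * z - 76) / (1056 * (z ^ 3 - z ^ 2 - 4))
  have hexp (θ : ℝ) : exp (3 * θ * I) - exp (2 * θ * I) - 4 =
      circleMap 0 1 θ ^ 3 - circleMap 0 1 θ ^ 2 - 4 := by
    simp only [circleMap_zero, ofReal_one, one_mul, ← exp_nat_mul]
    push_cast
    ring_nf
  have hH : DiffContOnCl ℂ H (ball 0 |1|) := by
    refine DifferentiableOn.diffContOnCl_ball (U := closedBall 0 1) ?_ (by simp)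
    intro z hz
    have hp := cubic_ne_zero_of_norm_le_one (by simpa using hz)
    fun_prop (disch := simp [hp])
  calc _ = Real.circleAverage (fun z ↦ 1 / (4 * ‖z ^ 3 - z ^ 2 - 4‖ ^ 2)) 0 1 := by
        simp only [Real.circleAverage_def, hexp, smul_eq_mul, one_div]
    _ = Real.circleAverage (fun z ↦ (H z).re) 0 1 :=
        Real.circleAverage_congr_sphere fun z hz ↦
          one_div_four_mul_norm_sq_eq_re (by simpa using hz)
    _ = 19 / 1056 := by rw [circleAverage_re_of_diffContOnCl hH]; norm_num [H]
end

section
/- The integral (1/(2π)) ∫₀^{2π} [ |e^{2iθ} + e^{iθ} − 2|² + |e^{2iθ} − e^{iθ} + 2|² + 2 + 4·|e^{iθ} + 2|² ] / (4·|e^{3iθ} − e^{2iθ} − 4|²) dθ equals 319/528. -/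
/-!
On the unit circle `z = e^{iθ}`, `c = cos θ`, the factorisation `z³ - z² - 4 = (z - 2)(z² + z + 2)`
turns the integrand into the rational function `(17 + 4c) / (4 (5 - 4c) (4c² + 3c + 1))` of `c`.
Its partial fraction decomposition writes it as `29/48` plus the derivative of a `2π`-periodic
function: the arguments of `2 - e^{-iθ}` and of `e^{2iθ} + e^{iθ} + 2` (written as arctangents,
both having positive real part) and `log (|z - r̄|² / |z - r|²)` for the root
`r = (-1 + i√7)/2` of `z² + z + 2`. So the mean over a period is `29/48 = 319/528`.
-/

open Real

theorem HasDerivAt.arctan_div {f g : ℝ → ℝ} {f' g' x : ℝ} (hf : HasDerivAt f f' x)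
    (hg : HasDerivAt g g' x) (hx : g x ≠ 0) :
    HasDerivAt (fun t => Real.arctan (f t / g t))
      ((f' * g x - f x * g') / (f x ^ 2 + g x ^ 2)) x := by
  refine (hf.div hg hx).arctan.congr_deriv ?_
  have : f x ^ 2 + g x ^ 2 ≠ 0 := by positivity
  simp only [Pi.div_apply]
  field_simp
  ring

theorem integral_eq_mul_of_hasDerivAt_sub_const_of_periodic {f G : ℝ → ℝ} {k T : ℝ}
    (hG : Function.Periodic G T) (hderiv : ∀ t, HasDerivAt G (f t - k) t)
    (hf : IntervalIntegrable f MeasureTheory.volume 0 T) :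
    ∫ t in 0..T, f t = k * T := by
  have hF : ∀ t, HasDerivAt (fun t => G t + k * t) (f t) t := fun t =>
    ((hderiv t).add ((hasDerivAt_id' t).const_mul k)).congr_deriv (by ring)
  rw [intervalIntegral.integral_eq_sub_of_hasDerivAt (fun t _ => hF t) hf]
  linear_combination (by simpa using hG 0 : G T = G 0)

lemma four_mul_sq_add_three_mul_add_one_pos (x : ℝ) : 0 < 4 * x ^ 2 + 3 * x + 1 := by
  nlinarith [sq_nonneg (8 * x + 3)]

lemma three_add_cos_add_mul_sin_pos {b : ℝ} (hb : b ^ 2 < 8) (t : ℝ) :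
    0 < 3 + cos t + b * sin t := by
  nlinarith [sin_sq_add_cos_sq t, sq_nonneg (b * cos t - sin t), sq_nonneg (cos t + b * sin t + 3)]

lemma re_sq_add_im_sq_of_norm_eq_one {z : ℂ} (hz : ‖z‖ = 1) : z.re ^ 2 + z.im ^ 2 = 1 := by
  rw [← Complex.sq_norm_sub_sq_re, hz]
  ring

lemma norm_sq_numerator_of_norm_eq_one {z : ℂ} (hz : ‖z‖ = 1) :
    ‖z ^ 2 + z - 2‖ ^ 2 + ‖z ^ 2 - z + 2‖ ^ 2 + 2 + 4 * ‖z + 2‖ ^ 2 = 34 + 8 * z.re := by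
  simp only [Complex.sq_norm, Complex.normSq_apply]
  simp only [Complex.sub_re, Complex.add_re, Complex.sub_im, Complex.add_im, pow_two,
    Complex.mul_re, Complex.mul_im, Complex.re_ofNat, Complex.im_ofNat]
  linear_combination (2 * z.re ^ 2 + 2 * z.im ^ 2 + 8) * re_sq_add_im_sq_of_norm_eq_one hz

lemma norm_sq_denominator_of_norm_eq_one {z : ℂ} (hz : ‖z‖ = 1) :
    ‖z ^ 3 - z ^ 2 - 4‖ ^ 2 = 2 * (5 - 4 * z.re) * (4 * z.re ^ 2 + 3 * z.re + 1) := by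
  have hlin : ‖z - 2‖ ^ 2 = 5 - 4 * z.re := by
    simp only [Complex.sq_norm, Complex.normSq_apply, Complex.sub_re, Complex.sub_im,
      Complex.re_ofNat, Complex.im_ofNat]
    linear_combination re_sq_add_im_sq_of_norm_eq_one hz
  have hquad : ‖z ^ 2 + z + 2‖ ^ 2 = 2 * (4 * z.re ^ 2 + 3 * z.re + 1) := by
    simp only [Complex.sq_norm, Complex.normSq_apply]
    simp only [Complex.add_re, Complex.add_im, pow_two, Complex.mul_re, Complex.mul_im,
      Complex.re_ofNat, Complex.im_ofNat]
    linear_combination (z.re ^ 2 + z.im ^ 2 + 2 * z.re - 2) * re_sq_add_im_sq_of_norm_eq_one hz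
  rw [show z ^ 3 - z ^ 2 - 4 = (z - 2) * (z ^ 2 + z + 2) by ring, norm_mul, mul_pow, hlin, hquad]
  ring

noncomputable def trigIntegrand (t : ℝ) : ℝ :=
  (17 + 4 * cos t) / (4 * (5 - 4 * cos t) * (4 * cos t ^ 2 + 3 * cos t + 1))

lemma continuous_trigIntegrand : Continuous trigIntegrand := by
  refine .div (by fun_prop) (by fun_prop) fun t => ?_
  have h5 : 0 < 5 - 4 * cos t := by linarith [cos_le_one t]
  have hq := four_mul_sq_add_three_mul_add_one_pos (cos t)
  positivity

lemma integrand_eq_trigIntegrand (θ : ℝ) :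
    (‖Complex.exp (2 * θ * Complex.I) + Complex.exp (θ * Complex.I) - 2‖ ^ 2 +
        ‖Complex.exp (2 * θ * Complex.I) - Complex.exp (θ * Complex.I) + 2‖ ^ 2 +
        2 + 4 * ‖Complex.exp (θ * Complex.I) + 2‖ ^ 2) /
        (4 * ‖Complex.exp (3 * θ * Complex.I) -
          Complex.exp (2 * θ * Complex.I) - 4‖ ^ 2) = trigIntegrand θ := by
  have hpow (n : ℕ) : Complex.exp (n * θ * Complex.I) = Complex.exp (θ * Complex.I) ^ n := by
    rw [← Complex.exp_nat_mul, mul_assoc]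
  have h2 : Complex.exp (2 * θ * Complex.I) = Complex.exp (θ * Complex.I) ^ 2 := by
    exact_mod_cast hpow 2
  have h3 : Complex.exp (3 * θ * Complex.I) = Complex.exp (θ * Complex.I) ^ 3 := by
    exact_mod_cast hpow 3
  have hz := Complex.norm_exp_ofReal_mul_I θ
  rw [h2, h3, norm_sq_numerator_of_norm_eq_one hz, norm_sq_denominator_of_norm_eq_one hz,
    Complex.exp_ofReal_mul_I_re, trigIntegrand]
  have h5 : 0 < 5 - 4 * cos θ := by linarith [cos_le_one θ]
  have hq := four_mul_sq_add_three_mul_add_one_pos (cos θ)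
  rw [div_eq_div_iff (by positivity) (by positivity)]
  ring

lemma partial_fraction_decomposition {c : ℝ} (h5 : 5 - 4 * c ≠ 0)
    (hq : 4 * c ^ 2 + 3 * c + 1 ≠ 0) :
    (17 + 4 * c) / (4 * (5 - 4 * c) * (4 * c ^ 2 + 3 * c + 1)) - 29 / 48 =
      (2 * c - 1) / (5 - 4 * c) / 3
        - 7 / 16 * ((8 * c ^ 2 + 5 * c - 1) / (2 * (4 * c ^ 2 + 3 * c + 1)))
        + 3 / 32 * ((1 + 3 * c) / (4 * c ^ 2 + 3 * c + 1)) := by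
  set q := 4 * c ^ 2 + 3 * c + 1 with hq_def
  field_simp
  rw [hq_def]
  ring

lemma hasDerivAt_arctan_sin_div_sub_cos {a : ℝ} (ha : 1 < a) (t : ℝ) :
    HasDerivAt (fun t => arctan (sin t / (a - cos t)))
      ((a * cos t - 1) / (a ^ 2 - 2 * a * cos t + 1)) t := by
  have hc := cos_le_one t
  refine ((hasDerivAt_sin t).arctan_div ((hasDerivAt_cos t).const_sub a)
    (by linarith)).congr_deriv ?_
  congr 1
  · linear_combination -sin_sq_add_cos_sq t
  · linear_combination sin_sq_add_cos_sq t

-- `sin t (2 cos t + 1)` and `2 cos t ² + cos t + 1` are the imaginary and real parts of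
-- `e^{2it} + e^{it} + 2`.
lemma hasDerivAt_arctan_sin_mul_div (t : ℝ) :
    HasDerivAt (fun t => arctan (sin t * (2 * cos t + 1) / (2 * cos t ^ 2 + cos t + 1)))
      ((8 * cos t ^ 2 + 5 * cos t - 1) / (2 * (4 * cos t ^ 2 + 3 * cos t + 1))) t := by
  have hv : 2 * cos t ^ 2 + cos t + 1 ≠ 0 := by nlinarith [sq_nonneg (4 * cos t + 1)]
  have hu := (hasDerivAt_sin t).mul (((hasDerivAt_cos t).const_mul 2).add_const 1)
  have hv' := (((hasDerivAt_cos t).pow 2).const_mul 2).add (hasDerivAt_cos t) |>.add_const 1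
  refine (hu.arctan_div hv' hv).congr_deriv ?_
  simp only [Pi.mul_apply, Pi.add_apply, Pi.pow_apply]
  congr 1
  · linear_combination (4 * cos t ^ 2 + 4 * cos t - 1) * sin_sq_add_cos_sq t
  · linear_combination (2 * cos t + 1) ^ 2 * sin_sq_add_cos_sq t

lemma hasDerivAt_log_ratio (t : ℝ) :
    HasDerivAt (fun t => log (3 + cos t + √7 * sin t) - log (3 + cos t - √7 * sin t))
      (√7 * (1 + 3 * cos t) / (4 * cos t ^ 2 + 3 * cos t + 1)) t := by
  have h7 : √7 ^ 2 = 7 := sq_sqrt (by norm_num)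
  have hp := three_add_cos_add_mul_sin_pos (b := √7) (by rw [h7]; norm_num) t
  have hm := three_add_cos_add_mul_sin_pos (b := -√7) (by rw [neg_sq, h7]; norm_num) t
  rw [neg_mul, ← sub_eq_add_neg] at hm
  have hp' := (((hasDerivAt_cos t).const_add 3).add ((hasDerivAt_sin t).const_mul √7)).log hp.ne'
  have hm' := (((hasDerivAt_cos t).const_add 3).sub ((hasDerivAt_sin t).const_mul √7)).log hm.ne'
  refine (hp'.sub hm').congr_deriv ?_
  have hprod : (3 + cos t + √7 * sin t) * (3 + cos t - √7 * sin t) =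
      2 * (4 * cos t ^ 2 + 3 * cos t + 1) := by
    linear_combination (-sin t ^ 2) * h7 - 7 * sin_sq_add_cos_sq t
  simp only [Pi.add_apply, Pi.sub_apply]
  have hq := four_mul_sq_add_three_mul_add_one_pos (cos t)
  rw [div_sub_div _ _ hp.ne' hm.ne', hprod, div_eq_div_iff (by positivity) hq.ne']
  linear_combination (2 * √7 * (4 * cos t ^ 2 + 3 * cos t + 1)) * sin_sq_add_cos_sq t

noncomputable def periodicPrimitivePart (t : ℝ) : ℝ :=
  arctan (sin t / (2 - cos t)) / 3
    - 7 / 16 * arctan (sin t * (2 * cos t + 1) / (2 * cos t ^ 2 + cos t + 1))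
    + 3 / (32 * √7) * (log (3 + cos t + √7 * sin t) - log (3 + cos t - √7 * sin t))

lemma periodic_periodicPrimitivePart : Function.Periodic periodicPrimitivePart (2 * π) := by
  intro t
  simp only [periodicPrimitivePart, sin_add_two_pi, cos_add_two_pi]

lemma hasDerivAt_periodicPrimitivePart (t : ℝ) :
    HasDerivAt periodicPrimitivePart (trigIntegrand t - 29 / 48) t := by
  have h := (((hasDerivAt_arctan_sin_div_sub_cos one_lt_two t).div_const 3).sub
    ((hasDerivAt_arctan_sin_mul_div t).const_mul (7 / 16))).add
    ((hasDerivAt_log_ratio t).const_mul (3 / (32 * √7)))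
  refine h.congr_deriv ?_
  have h5 : 5 - 4 * cos t ≠ 0 := by linarith [cos_le_one t]
  have hq := (four_mul_sq_add_three_mul_add_one_pos (cos t)).ne'
  rw [trigIntegrand, partial_fraction_decomposition h5 hq]
  field_simp
  ring

theorem total_first_passage_probability :
    (1 / (2 * Real.pi)) * ∫ θ in (0 : ℝ)..(2 * Real.pi),
      (‖Complex.exp (2 * θ * Complex.I) + Complex.exp (θ * Complex.I) - 2‖ ^ 2 +
        ‖Complex.exp (2 * θ * Complex.I) - Complex.exp (θ * Complex.I) + 2‖ ^ 2 +
        2 + 4 * ‖Complex.exp (θ * Complex.I) + 2‖ ^ 2) /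
        (4 * ‖Complex.exp (3 * θ * Complex.I) -
          Complex.exp (2 * θ * Complex.I) - 4‖ ^ 2) = 319 / 528 := by
  rw [intervalIntegral.integral_congr (g := trigIntegrand) fun θ _ => integrand_eq_trigIntegrand θ,
    integral_eq_mul_of_hasDerivAt_sub_const_of_periodic periodic_periodicPrimitivePart
      hasDerivAt_periodicPrimitivePart (continuous_trigIntegrand.intervalIntegrable _ _)]
  field_simp
  norm_num
end
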